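/- arXiv:2007.02411 — 6 statements merged into one kernel-verified Lean document; each statement's English description precedes it below -/
import Mathlib

section
/- Let ξ be a real-valued random variable with E[max(ξ,0)] < ∞, and let q be its (1-α)-quantile for α ∈ (0,1], i.e. q = inf{t : P(ξ ≤ t) ≥ 1-α}. If ξ has a positive density at q (so that P(ξ ≤ q) = 1-α), then inf over η ∈ ℝ of { (1/α) E[max(ξ - η, 0)] + η } equals E[ξ | ξ ≥ q]. -/
open MeasureTheory Set

/-! The pointwise bound `max (ξ - η) 0 ≥ 𝟙{q ≤ ξ} (ξ - η)`, integrated, gives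
`E[max (ξ - η) 0] ≥ E[ξ; ξ ≥ q] - η α` for every `η`, since `P(ξ ≥ q) = α`; dividing by `α`
bounds the objective below by `α⁻¹ E[ξ; ξ ≥ q]`, and at `η = q` the pointwise bound is an
equality, so this lower bound is attained. -/

section CVaR

variable {Ω : Type*} [MeasurableSpace Ω] {P : Measure Ω} {ξ : Ω → ℝ}

lemma integrable_max_sub_const_zero [IsFiniteMeasure P] (hmeas : Measurable ξ)
    (hint : Integrable (fun ω => max (ξ ω) 0) P) (η : ℝ) :
    Integrable (fun ω => max (ξ ω - η) 0) P := by
  refine (hint.add (integrable_const |η|)).mono'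
    ((hmeas.sub_const η).max measurable_const).aestronglyMeasurable (ae_of_all _ fun ω => ?_)
  rw [Real.norm_eq_abs, abs_of_nonneg (le_max_right _ _), Pi.add_apply]
  exact max_le (by linarith [le_max_left (ξ ω) 0, neg_abs_le η])
    (add_nonneg (le_max_right _ _) (abs_nonneg η))

lemma integrableOn_setOf_le [IsFiniteMeasure P] (hmeas : Measurable ξ)
    (hint : Integrable (fun ω => max (ξ ω) 0) P) (q : ℝ) :
    IntegrableOn ξ {ω | q ≤ ξ ω} P := by
  refine (hint.add (integrable_const |q|)).integrableOn.mono'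
    hmeas.aestronglyMeasurable.restrict ?_
  rw [ae_restrict_iff' (measurableSet_le measurable_const hmeas)]
  refine ae_of_all _ fun ω (hω : q ≤ ξ ω) => ?_
  rw [Real.norm_eq_abs, abs_le, Pi.add_apply]
  constructor <;> linarith [le_max_left (ξ ω) 0, le_max_right (ξ ω) 0, neg_abs_le q, abs_nonneg q]

lemma measureReal_setOf_le_eq_one_sub [IsProbabilityMeasure P] (hmeas : Measurable ξ) {q : ℝ}
    (hatom : P {ω | ξ ω = q} = 0) :
    P.real {ω | q ≤ ξ ω} = 1 - P.real {ω | ξ ω ≤ q} := by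
  have hgt : {ω | q ≤ ξ ω} \ {ω | ξ ω = q} = {ω | ξ ω ≤ q}ᶜ := by
    ext ω
    simp only [Set.mem_sdiff, mem_ofPred_eq, mem_compl_iff, not_le]
    constructor
    · rintro ⟨hle, hne⟩
      exact lt_of_le_of_ne hle (Ne.symm hne)
    · intro hlt
      exact ⟨hlt.le, hlt.ne'⟩
  rw [measureReal_def, ← measure_sdiff_null hatom, hgt, ← measureReal_def,
    probReal_compl_eq_one_sub (measurableSet_le hmeas measurable_const)]

lemma setIntegral_le_integral_max_zero {g : Ω → ℝ} {S : Set Ω} (hg : IntegrableOn g S P)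
    (hg_pos : Integrable (fun ω => max (g ω) 0) P) :
    ∫ ω in S, g ω ∂P ≤ ∫ ω, max (g ω) 0 ∂P :=
  calc ∫ ω in S, g ω ∂P ≤ ∫ ω in S, max (g ω) 0 ∂P :=
        integral_mono hg hg_pos.integrableOn fun _ => le_max_left _ _
    _ ≤ ∫ ω, max (g ω) 0 ∂P := setIntegral_le_integral hg_pos (ae_of_all _ fun _ => le_max_right _ _)

lemma integral_max_sub_zero_eq_setIntegral (hmeas : Measurable ξ) (q : ℝ) :
    ∫ ω, max (ξ ω - q) 0 ∂P = ∫ ω in {ω | q ≤ ξ ω}, (ξ ω - q) ∂P := by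
  rw [← integral_indicator (measurableSet_le measurable_const hmeas)]
  congr 1
  ext ω
  by_cases h : q ≤ ξ ω
  · rw [indicator_of_mem (show ω ∈ {ω | q ≤ ξ ω} from h), max_eq_left (sub_nonneg.2 h)]
  · rw [indicator_of_notMem (show ω ∉ {ω | q ≤ ξ ω} from h),
      max_eq_right (sub_nonpos.2 (not_le.1 h).le)]

lemma setIntegral_setOf_le_sub_const [IsFiniteMeasure P] (hmeas : Measurable ξ)
    (hint : Integrable (fun ω => max (ξ ω) 0) P) {q α : ℝ} (hS : P.real {ω | q ≤ ξ ω} = α)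
    (η : ℝ) :
    ∫ ω in {ω | q ≤ ξ ω}, (ξ ω - η) ∂P = ∫ ω in {ω | q ≤ ξ ω}, ξ ω ∂P - η * α := by
  rw [integral_sub (integrableOn_setOf_le hmeas hint q) (integrable_const η), setIntegral_const,
    hS, smul_eq_mul, mul_comm]

theorem isLeast_cvar_objective [IsFiniteMeasure P] (hmeas : Measurable ξ)
    (hint : Integrable (fun ω => max (ξ ω) 0) P) {q α : ℝ} (hα : 0 < α)
    (hS : P.real {ω | q ≤ ξ ω} = α) :
    IsLeast (range fun η => α⁻¹ * ∫ ω, max (ξ ω - η) 0 ∂P + η)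
      (α⁻¹ * ∫ ω in {ω | q ≤ ξ ω}, ξ ω ∂P) := by
  have hshift : ∀ A η : ℝ, α⁻¹ * A = α⁻¹ * (A - η * α) + η := fun A η => by field_simp; ring
  refine ⟨⟨q, ?_⟩, ?_⟩
  · dsimp only
    rw [integral_max_sub_zero_eq_setIntegral hmeas, setIntegral_setOf_le_sub_const hmeas hint hS,
      ← hshift]
  · rintro _ ⟨η, rfl⟩
    have hbound : ∫ ω in {ω | q ≤ ξ ω}, ξ ω ∂P - η * α ≤ ∫ ω, max (ξ ω - η) 0 ∂P := by
      rw [← setIntegral_setOf_le_sub_const hmeas hint hS η]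
      exact setIntegral_le_integral_max_zero
        ((integrableOn_setOf_le hmeas hint q).sub (integrable_const η))
        (integrable_max_sub_const_zero hmeas hint η)
    dsimp only
    rw [hshift _ η]
    gcongr

end CVaR

theorem stmt0_general
    {Ω : Type*} [MeasurableSpace Ω] (P : Measure Ω) [IsProbabilityMeasure P]
    (ξ : Ω → ℝ) (hmeas : Measurable ξ)
    (hint : Integrable (fun ω => max (ξ ω) 0) P)
    (α : ℝ) (hα : α ∈ Set.Ioc (0:ℝ) 1)
    (q : ℝ)
    (hFq : (P {ω | ξ ω ≤ q}).toReal = 1 - α)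
    (hatom : P {ω | ξ ω = q} = 0) :
    (⨅ η : ℝ, (α⁻¹ * ∫ ω, max (ξ ω - η) 0 ∂P + η)) =
      (∫ ω in {ω | q ≤ ξ ω}, ξ ω ∂P) / (P {ω | q ≤ ξ ω}).toReal := by
  have hS : P.real {ω | q ≤ ξ ω} = α := by
    rw [measureReal_setOf_le_eq_one_sub hmeas hatom, measureReal_def, hFq, sub_sub_cancel]
  rw [← measureReal_def, hS, div_eq_inv_mul]
  exact (isLeast_cvar_objective hmeas hint hα.1 hS).csInf_eq

/-- CVaR dual representation: the infimum of the dual objective equals the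
conditional expectation of `ξ` above its `(1-α)`-quantile. -/
theorem stmt0
    {Ω : Type*} [MeasurableSpace Ω] (P : Measure Ω) [IsProbabilityMeasure P]
    (ξ : Ω → ℝ) (hmeas : Measurable ξ)
    (hint : Integrable (fun ω => max (ξ ω) 0) P)
    (α : ℝ) (hα : α ∈ Set.Ioc (0:ℝ) 1)
    (q : ℝ) (hq : q = sInf {t : ℝ | 1 - α ≤ (P {ω | ξ ω ≤ t}).toReal})
    (hFq : (P {ω | ξ ω ≤ q}).toReal = 1 - α)
    (hatom : P {ω | ξ ω = q} = 0) :
    (⨅ η : ℝ, (α⁻¹ * ∫ ω, max (ξ ω - η) 0 ∂P + η)) =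
      (∫ ω in {ω | q ≤ ξ ω}, ξ ω ∂P) / (P {ω | q ≤ ξ ω}).toReal :=
  stmt0_general P ξ hmeas hint α hα q hFq hatom
end

section
/- Let ξ be a real random variable with E[max(ξ,0)] < ∞ that has a positive density at its (1-α)-quantile q = inf{t : F_ξ(t) ≥ 1-α}, for α ∈ (0,1). Then the set of minimizers of the convex function η ↦ (1/α) E[max(ξ - η, 0)] + η is exactly the singleton {q}. -/
/-!
Write `F` for the CDF of `ξ` and `g` for the objective. Integrating
`(b - a) 1{x > b} ≤ (x - a)₊ - (x - b)₊ ≤ (b - a) 1{x > a}` (for `a ≤ b`) brackets the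
increments of `g`: `(b - a) (F a - (1 - α)) ≤ α (g b - g a) ≤ (b - a) (F b - (1 - α))`.
So `g` is minimal wherever `F = 1 - α`, `g b < g a` whenever `a < b` and `F b < 1 - α`, and
`g a < g b` whenever `a < b` and `F a > 1 - α`. At the quantile `q`, continuity of `F` gives
`F q = 1 - α`, the infimum gives `F < 1 - α` to the left of `q`, and the positive density gives
`F > 1 - α` just to the right of `q`, so every other point is beaten by a point closer to `q`.
-/

open MeasureTheory Filter Set ProbabilityTheory Topology

lemma HasDerivAt.eventually_nhdsGT_lt {f : ℝ → ℝ} {f' x : ℝ} (hf : HasDerivAt f f' x)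
    (hf' : 0 < f') : ∀ᶠ y in 𝓝[>] x, f x < f y := by
  have hslope := (hasDerivAt_iff_tendsto_slope.mp hf).mono_left (nhdsGT_le_nhdsNE x)
  filter_upwards [hslope.eventually (eventually_gt_nhds hf'), self_mem_nhdsWithin] with y hy hxy
  exact (slope_pos_iff hxy).mp hy

lemma apply_csInf_superlevel_eq {f : ℝ → ℝ} {c : ℝ} (hne : {t | c ≤ f t}.Nonempty)
    (hbdd : BddBelow {t | c ≤ f t}) (hf : ContinuousAt f (sInf {t | c ≤ f t})) :
    f (sInf {t | c ≤ f t}) = c := by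
  set q := sInf {t | c ≤ f t}
  apply le_antisymm
  · refine le_of_tendsto (hf.tendsto.mono_left (nhdsWithin_le_nhds (s := Iio q)))
      (eventually_nhdsWithin_of_forall fun t ht => ?_)
    exact (not_le.mp (notMem_of_lt_csInf (s := {t | c ≤ f t}) ht hbdd)).le
  · exact ContinuousWithinAt.closure_le (csInf_mem_closure hne hbdd) continuousWithinAt_const
      hf.continuousWithinAt fun t ht => ht

section CDF

variable (μ : Measure ℝ) {c : ℝ}

lemma nonempty_cdf_superlevel (hc : c < 1) : {t | c ≤ cdf μ t}.Nonempty :=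
  ((tendsto_cdf_atTop μ).eventually (eventually_ge_nhds hc)).exists

lemma bddBelow_cdf_superlevel (hc : 0 < c) : BddBelow {t | c ≤ cdf μ t} := by
  obtain ⟨b, hb⟩ := eventually_atBot.mp ((tendsto_cdf_atBot μ).eventually (eventually_lt_nhds hc))
  exact ⟨b, fun t ht => le_of_not_gt fun htb => (hb t htb.le).not_ge ht⟩

end CDF

section Objective

variable {Ω : Type*} [MeasurableSpace Ω] (P : Measure Ω) {ξ : Ω → ℝ}

lemma toReal_measure_le_eq_cdf [IsProbabilityMeasure P] (hξ : Measurable ξ) (t : ℝ) :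
    (P {ω | ξ ω ≤ t}).toReal = cdf (P.map ξ) t := by
  have := Measure.isProbabilityMeasure_map (μ := P) hξ.aemeasurable
  rw [cdf_eq_real, map_measureReal_apply hξ measurableSet_Iic]
  rfl

lemma measureReal_lt_eq_one_sub_cdf [IsProbabilityMeasure P] (hξ : Measurable ξ) (t : ℝ) :
    P.real {ω | t < ξ ω} = 1 - cdf (P.map ξ) t := by
  have hcompl : {ω | t < ξ ω} = {ω | ξ ω ≤ t}ᶜ := by
    ext ω
    simp
  rw [hcompl, measureReal_compl (s := {ω | ξ ω ≤ t}) (hξ measurableSet_Iic), probReal_univ,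
    ← toReal_measure_le_eq_cdf P hξ, measureReal_def]

lemma integrable_max_sub_const [IsFiniteMeasure P] (hξ : Measurable ξ)
    (hint : Integrable (fun ω => max (ξ ω) 0) P) (a : ℝ) :
    Integrable (fun ω => max (ξ ω - a) 0) P := by
  refine (hint.add (integrable_const |a|)).mono'
    ((hξ.sub_const a).max measurable_const).aestronglyMeasurable (ae_of_all _ fun ω => ?_)
  rw [Real.norm_of_nonneg (le_max_right _ _), Pi.add_apply]
  exact max_le (by linarith [le_max_left (ξ ω) 0, neg_abs_le a]) (by positivity)

lemma indicator_Ioi_le_max_sub_sub_max_sub {a b : ℝ} (hab : a ≤ b) (x : ℝ) :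
    (Ioi b).indicator (fun _ => b - a) x ≤ max (x - a) 0 - max (x - b) 0 := by
  by_cases hx : b < x
  · simp only [indicator_of_mem (mem_Ioi.mpr hx), max_eq_left (by linarith : 0 ≤ x - a),
      max_eq_left (by linarith : 0 ≤ x - b), le_refl, sub_sub_sub_cancel_left]
  · rw [indicator_of_notMem (by simpa using hx), sub_nonneg]
    exact max_le_max (by linarith) le_rfl

lemma max_sub_sub_max_sub_le_indicator_Ioi {a b : ℝ} (hab : a ≤ b) (x : ℝ) :
    max (x - a) 0 - max (x - b) 0 ≤ (Ioi a).indicator (fun _ => b - a) x := by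
  by_cases hx : a < x
  · rw [indicator_of_mem (mem_Ioi.mpr hx), max_eq_left (by linarith : 0 ≤ x - a)]
    linarith [le_max_left (x - b) 0]
  · rw [indicator_of_notMem (by simpa using hx), max_eq_right (by linarith : x - a ≤ 0),
      max_eq_right (by linarith : x - b ≤ 0), sub_self]

lemma integral_max_sub_sub_mem_Icc [IsProbabilityMeasure P] (hξ : Measurable ξ)
    (hint : Integrable (fun ω => max (ξ ω) 0) P) {a b : ℝ} (hab : a ≤ b) :
    ∫ ω, max (ξ ω - a) 0 ∂P - ∫ ω, max (ξ ω - b) 0 ∂P ∈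
      Icc ((b - a) * (1 - cdf (P.map ξ) b)) ((b - a) * (1 - cdf (P.map ξ) a)) := by
  have hdiff := (integrable_max_sub_const P hξ hint a).sub (integrable_max_sub_const P hξ hint b)
  have hindicator (t : ℝ) :
      ∫ ω, {ω | t < ξ ω}.indicator (fun _ => b - a) ω ∂P = (b - a) * (1 - cdf (P.map ξ) t) := by
    rw [integral_indicator_const _ (measurableSet_lt measurable_const hξ), smul_eq_mul,
      measureReal_lt_eq_one_sub_cdf P hξ, mul_comm]
  have hintegrable (t : ℝ) : Integrable (fun ω => {ω | t < ξ ω}.indicator (fun _ => b - a) ω) P :=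
    (integrable_const _).indicator (measurableSet_lt measurable_const hξ)
  rw [← integral_sub (integrable_max_sub_const P hξ hint a) (integrable_max_sub_const P hξ hint b),
    ← hindicator, ← hindicator]
  exact ⟨integral_mono (hintegrable b) hdiff
      fun ω => indicator_Ioi_le_max_sub_sub_max_sub hab (ξ ω),
    integral_mono hdiff (hintegrable a) fun ω => max_sub_sub_max_sub_le_indicator_Ioi hab (ξ ω)⟩

variable (ξ) in
/-- The Rockafellar–Uryasev objective, whose minimum value is `CVaR_α(ξ)`. -/
noncomputable def cvarObjective (α η : ℝ) : ℝ :=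
  α⁻¹ * ∫ ω, max (ξ ω - η) 0 ∂P + η

variable [IsProbabilityMeasure P] (hξ : Measurable ξ) (hint : Integrable (fun ω => max (ξ ω) 0) P)
  {α : ℝ} (hα : 0 < α)
include hξ hint hα

lemma mul_cvarObjective_sub_mem_Icc {a b : ℝ} (hab : a ≤ b) :
    α * (cvarObjective P ξ α b - cvarObjective P ξ α a) ∈
      Icc ((b - a) * (cdf (P.map ξ) a - (1 - α))) ((b - a) * (cdf (P.map ξ) b - (1 - α))) := by
  obtain ⟨hlower, hupper⟩ := integral_max_sub_sub_mem_Icc P hξ hint hab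
  have hexpand : α * (cvarObjective P ξ α b - cvarObjective P ξ α a) =
      α * (b - a) - (∫ ω, max (ξ ω - a) 0 ∂P - ∫ ω, max (ξ ω - b) 0 ∂P) := by
    unfold cvarObjective
    field_simp
    ring
  rw [hexpand]
  constructor <;> linarith

lemma cvarObjective_le_of_cdf_eq {η : ℝ} (hη : cdf (P.map ξ) η = 1 - α) (η' : ℝ) :
    cvarObjective P ξ α η ≤ cvarObjective P ξ α η' := by
  rcases le_total η η' with h | h
  · have := (mul_cvarObjective_sub_mem_Icc P hξ hint hα h).1
    rw [hη, sub_self, mul_zero] at this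
    nlinarith
  · have := (mul_cvarObjective_sub_mem_Icc P hξ hint hα h).2
    rw [hη, sub_self, mul_zero] at this
    nlinarith

lemma cvarObjective_lt_of_cdf_lt {a b : ℝ} (hab : a < b) (hb : cdf (P.map ξ) b < 1 - α) :
    cvarObjective P ξ α b < cvarObjective P ξ α a := by
  have := (mul_cvarObjective_sub_mem_Icc P hξ hint hα hab.le).2
  nlinarith [mul_pos (sub_pos.mpr hab) (sub_pos.mpr hb)]

lemma cvarObjective_lt_of_lt_cdf {a b : ℝ} (hab : a < b) (ha : 1 - α < cdf (P.map ξ) a) :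
    cvarObjective P ξ α a < cvarObjective P ξ α b := by
  have := (mul_cvarObjective_sub_mem_Icc P hξ hint hα hab.le).1
  nlinarith [mul_pos (sub_pos.mpr hab) (sub_pos.mpr ha)]

end Objective

/-- CVaR minimizer uniqueness: if `ξ` has a positive density at its
`(1-α)`-quantile `q`, the set of minimizers of the CVaR dual objective is `{q}`. -/
theorem stmt1
    {Ω : Type*} [MeasurableSpace Ω] (P : Measure Ω) [IsProbabilityMeasure P]
    (ξ : Ω → ℝ) (hmeas : Measurable ξ)
    (hint : Integrable (fun ω => max (ξ ω) 0) P)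
    (α : ℝ) (hα : α ∈ Set.Ioo (0:ℝ) 1)
    (q : ℝ) (hq : q = sInf {t : ℝ | 1 - α ≤ (P {ω | ξ ω ≤ t}).toReal})
    (d : ℝ) (hd : 0 < d)
    (hderiv : HasDerivAt (fun t => (P {ω | ξ ω ≤ t}).toReal) d q) :
    {η : ℝ | ∀ η' : ℝ,
        α⁻¹ * ∫ ω, max (ξ ω - η) 0 ∂P + η ≤ α⁻¹ * ∫ ω, max (ξ ω - η') 0 ∂P + η'}
      = {q} := by
  obtain ⟨hα0, hα1⟩ := hα
  simp_rw [toReal_measure_le_eq_cdf P hmeas] at hq hderiv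
  have hbdd := bddBelow_cdf_superlevel (P.map ξ) (sub_pos.mpr hα1)
  have hFq : cdf (P.map ξ) q = 1 - α := by
    subst hq
    exact apply_csInf_superlevel_eq (nonempty_cdf_superlevel _ (by linarith)) hbdd
      hderiv.continuousAt
  ext η
  refine ⟨fun hη => ?_, fun hη => ?_⟩
  · by_contra hne
    rcases lt_or_gt_of_ne hne with hlt | hgt
    · have hmid : (η + q) / 2 < sInf {t | 1 - α ≤ cdf (P.map ξ) t} := by linarith
      have hcdf : cdf (P.map ξ) ((η + q) / 2) < 1 - α :=
        not_le.mp fun h => notMem_of_lt_csInf hmid hbdd h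
      exact (cvarObjective_lt_of_cdf_lt P hmeas hint hα0 (by linarith) hcdf).not_ge (hη _)
    · obtain ⟨m, hqm, hmη⟩ :=
        ((hderiv.eventually_nhdsGT_lt hd).and (Ioo_mem_nhdsGT hgt)).exists
      exact (cvarObjective_lt_of_lt_cdf P hmeas hint hα0 hmη.2 (hFq ▸ hqm)).not_ge (hη _)
  · rw [mem_singleton_iff.mp hη]
    exact cvarObjective_le_of_cdf_eq P hmeas hint hα0 hFq
end

section
/- Let P be a probability distribution on a covariate space X and α ∈ (0,1]. Define Q_α as the set of probability measures Q such that P = a Q + (1-a) Q' for some a ≥ α and some probability measure Q'. Then Q_α equals the set of probability measures Q absolutely continuous with respect to P whose density dQ/dP satisfies 0 ≤ dQ/dP ≤ 1/α P-almost surely. -/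
/-!
A mixture `P = a • Q + (1 - a) • Q'` exhibits `a • Q ≤ P`, and conversely, when `α • Q ≤ P`,
the remainder `P - α • Q` has mass `1 - α` and rescales to a probability measure `Q'`.
For `Q ≪ P`, the domination `c • Q ≤ P` says exactly that `dQ/dP ≤ c⁻¹` almost everywhere,
because `c • Q = P.withDensity (c • dQ/dP)`.
-/

open MeasureTheory Set
open scoped ENNReal

namespace MeasureTheory.Measure

variable {X : Type*} [MeasurableSpace X] {μ ν : Measure X} {c : ℝ≥0∞}

theorem absolutelyContinuous_of_smul_le (hc : c ≠ 0) (h : c • μ ≤ ν) : μ ≪ ν :=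
  (absolutelyContinuous_smul hc).trans (absolutelyContinuous_of_le h)

theorem smul_le_iff_ae_rnDeriv_le_inv [IsFiniteMeasure μ] [SigmaFinite ν] (hμν : μ ≪ ν)
    (hc : c ≠ ∞) : c • μ ≤ ν ↔ ∀ᵐ x ∂ν, μ.rnDeriv ν x ≤ c⁻¹ := by
  constructor
  · intro h
    filter_upwards [rnDeriv_le_one_of_le h, rnDeriv_smul_left_of_ne_top μ ν hc]
      with x hle hsmul
    rw [ENNReal.le_inv_iff_mul_le, mul_comm]
    simpa [hsmul] using hle
  · intro h
    calc c • μ = ν.withDensity (c • μ.rnDeriv ν) := by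
          rw [withDensity_smul' _ _ hc, withDensity_rnDeriv_eq μ ν hμν]
      _ ≤ ν.withDensity 1 := by
          refine withDensity_mono ?_
          filter_upwards [h] with x hx
          calc c * μ.rnDeriv ν x ≤ c * c⁻¹ := by gcongr
            _ ≤ 1 := ENNReal.mul_inv_le_one c
      _ = ν := withDensity_one

theorem exists_isProbabilityMeasure_eq_smul [Nonempty X] (ρ : Measure X) [IsFiniteMeasure ρ] :
    ∃ ρ', IsProbabilityMeasure ρ' ∧ ρ = ρ univ • ρ' := by
  rcases eq_zero_or_neZero ρ with rfl | hρ
  · exact ⟨dirac (Classical.arbitrary X), inferInstance, by simp⟩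
  · refine ⟨(ρ univ)⁻¹ • ρ, inferInstance, ?_⟩
    rw [smul_smul, ENNReal.mul_inv_cancel (NeZero.ne _) (measure_ne_top _ _), one_smul]

theorem exists_eq_smul_add_smul_of_smul_le [IsProbabilityMeasure μ] [IsProbabilityMeasure ν]
    {a : ℝ} (ha : 0 ≤ a) (h : ENNReal.ofReal a • μ ≤ ν) :
    ∃ μ', IsProbabilityMeasure μ' ∧ ν = ENNReal.ofReal a • μ + ENNReal.ofReal (1 - a) • μ' := by
  have := nonempty_of_isProbabilityMeasure ν
  have := isFiniteMeasure_of_le ν h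
  obtain ⟨μ', hμ', hrest⟩ := exists_isProbabilityMeasure_eq_smul (ν - ENNReal.ofReal a • μ)
  have hmass : (ν - ENNReal.ofReal a • μ) univ = ENNReal.ofReal (1 - a) := by
    rw [sub_apply MeasurableSet.univ h, ENNReal.ofReal_sub _ ha]
    simp
  refine ⟨μ', hμ', ?_⟩
  rw [← hmass, ← hrest, add_comm, sub_add_cancel_of_le h]

end MeasureTheory.Measure

open MeasureTheory.Measure in
/-- The set of α-subpopulations (mixture components of weight at least α) of `P`
equals the set of probability measures absolutely continuous w.r.t. `P` with
density bounded by `1/α`. -/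
theorem stmt3
    {X : Type*} [MeasurableSpace X] (P : Measure X) [IsProbabilityMeasure P]
    (α : ℝ) (hα : α ∈ Set.Ioc (0:ℝ) 1) :
    {Q : Measure X | IsProbabilityMeasure Q ∧
        ∃ a : ℝ, α ≤ a ∧ a ≤ 1 ∧ ∃ Q' : Measure X, IsProbabilityMeasure Q' ∧
          P = ENNReal.ofReal a • Q + ENNReal.ofReal (1 - a) • Q'}
      = {Q : Measure X | IsProbabilityMeasure Q ∧ Q ≪ P ∧
          ∀ᵐ x ∂P, Q.rnDeriv P x ≤ ENNReal.ofReal (1 / α)} := by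
  obtain ⟨hα0, hα1⟩ := hα
  ext Q
  constructor
  · rintro ⟨hQ, a, hαa, -, Q', -, hP⟩
    have ha0 : 0 < a := hα0.trans_le hαa
    have hle : ENNReal.ofReal a • Q ≤ P := hP ▸ Measure.le_add_right le_rfl
    have hQP := absolutelyContinuous_of_smul_le (ENNReal.ofReal_pos.2 ha0).ne' hle
    refine ⟨hQ, hQP, ?_⟩
    filter_upwards [(smul_le_iff_ae_rnDeriv_le_inv hQP ENNReal.ofReal_ne_top).1 hle] with x hx
    rw [← ENNReal.ofReal_inv_of_pos ha0] at hx
    exact hx.trans (ENNReal.ofReal_le_ofReal (by simpa using inv_anti₀ hα0 hαa))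
  · rintro ⟨hQ, hQP, hbd⟩
    have hle : ENNReal.ofReal α • Q ≤ P := by
      refine (smul_le_iff_ae_rnDeriv_le_inv hQP ENNReal.ofReal_ne_top).2 ?_
      simpa [ENNReal.ofReal_inv_of_pos hα0] using hbd
    obtain ⟨Q', hQ', hP⟩ := exists_eq_smul_add_smul_of_smul_le hα0.le hle
    exact ⟨hQ, α, le_rfl, hα1, Q', hQ', hP⟩
end

section
/- Let F_n, F : ℝ → ℝ be CDFs of random variables ξ_n, ξ with ‖ξ_n - ξ‖_∞ ≤ δ_n → 0 (as random variables on a common probability space), and suppose F is differentiable at its (1-α)-quantile q with F'(q) > 0. Then the (1-α)-quantiles q_n of ξ_n satisfy |q_n - q| = O(δ_n). -/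
/-!
A uniform perturbation by `δ` shifts the distribution function by at most `δ` in its argument,
`F (t - δ) ≤ Fₙ t ≤ F (t + δ)`, so the level sets `{t | 1 - α ≤ ·}` of `F` and `Fₙ` are
`δ`-translates of subsets of each other and their infima differ by at most `δ`: `|qₙ - q| ≤ δₙ`.
The infima are genuine (not the junk value `sInf ∅ = 0`) because a distribution function tends
to `0` and `1` at `∓∞`.
-/

open MeasureTheory Filter Set Asymptotics Topology

noncomputable def lowerQuantile (F : ℝ → ℝ) (c : ℝ) : ℝ := sInf {t | c ≤ F t}

theorem nonempty_setOf_le_of_tendsto_atTop {F : ℝ → ℝ} {b c : ℝ}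
    (hF : Tendsto F atTop (𝓝 b)) (hc : c < b) : {t | c ≤ F t}.Nonempty :=
  ((hF.eventually (eventually_gt_nhds hc)).exists).imp fun _ ht ↦ ht.le

theorem bddBelow_setOf_le_of_tendsto_atBot {F : ℝ → ℝ} {a c : ℝ} (hmono : Monotone F)
    (hF : Tendsto F atBot (𝓝 a)) (hc : a < c) : BddBelow {t | c ≤ F t} := by
  obtain ⟨t₀, ht₀⟩ := (hF.eventually (eventually_lt_nhds hc)).exists
  exact ⟨t₀, fun t ht ↦ le_of_not_ge fun hle ↦ (ht.trans (hmono hle)).not_gt ht₀⟩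

theorem lowerQuantile_le_add {F G : ℝ → ℝ} {c δ : ℝ} (hF : {t | c ≤ F t}.Nonempty)
    (hG : BddBelow {t | c ≤ G t}) (hFG : ∀ t, F t ≤ G (t + δ)) :
    lowerQuantile G c ≤ lowerQuantile F c + δ := by
  suffices lowerQuantile G c - δ ≤ lowerQuantile F c by linarith
  refine le_csInf hF fun t ht ↦ ?_
  have : lowerQuantile G c ≤ t + δ := csInf_le hG ((ht : c ≤ F t).trans (hFG t))
  linarith

theorem abs_lowerQuantile_sub_le {F G : ℝ → ℝ} {c δ : ℝ} (hF : {t | c ≤ F t}.Nonempty)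
    (hF' : BddBelow {t | c ≤ F t}) (hFG : ∀ t, F t ≤ G (t + δ)) (hGF : ∀ t, G t ≤ F (t + δ)) :
    |lowerQuantile G c - lowerQuantile F c| ≤ δ := by
  have hG : {t | c ≤ G t}.Nonempty :=
    let ⟨t, ht⟩ := hF; ⟨t + δ, (ht : c ≤ F t).trans (hFG t)⟩
  have hG' : BddBelow {t | c ≤ G t} := by
    obtain ⟨b, hb⟩ := hF'
    refine ⟨b - δ, fun t ht ↦ ?_⟩
    have : b ≤ t + δ := hb ((ht : c ≤ G t).trans (hGF t))
    linarith
  have h₁ := lowerQuantile_le_add hF hG' hFG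
  have h₂ := lowerQuantile_le_add hG hF' hGF
  rw [abs_le]
  constructor <;> linarith

section Distribution

variable {Ω : Type*} [MeasurableSpace Ω] (P : Measure Ω)

theorem toReal_measure_le_eq_cdf_map [IsProbabilityMeasure P] {ξ : Ω → ℝ} (hξ : Measurable ξ)
    (t : ℝ) : (P {ω | ξ ω ≤ t}).toReal = ProbabilityTheory.cdf (P.map ξ) t := by
  have : IsProbabilityMeasure (P.map ξ) := Measure.isProbabilityMeasure_map hξ.aemeasurable
  rw [ProbabilityTheory.cdf_eq_real, measureReal_def, Measure.map_apply hξ measurableSet_Iic]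
  rfl

theorem toReal_measure_le_le_add [IsFiniteMeasure P] {ξ η : Ω → ℝ} {δ : ℝ}
    (h : ∀ ω, η ω ≤ ξ ω + δ) (t : ℝ) :
    (P {ω | ξ ω ≤ t}).toReal ≤ (P {ω | η ω ≤ t + δ}).toReal :=
  ENNReal.toReal_mono (measure_ne_top P _) <| measure_mono fun ω (hω : ξ ω ≤ t) ↦
    show η ω ≤ t + δ by linarith [h ω]

theorem nonempty_and_bddBelow_setOf_le_measure_le [IsProbabilityMeasure P] {ξ : Ω → ℝ}
    (hξ : Measurable ξ) {c : ℝ} (hc₀ : 0 < c) (hc₁ : c < 1) :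
    {t | c ≤ (P {ω | ξ ω ≤ t}).toReal}.Nonempty ∧
      BddBelow {t | c ≤ (P {ω | ξ ω ≤ t}).toReal} := by
  have : IsProbabilityMeasure (P.map ξ) := Measure.isProbabilityMeasure_map hξ.aemeasurable
  simp only [toReal_measure_le_eq_cdf_map P hξ]
  exact ⟨nonempty_setOf_le_of_tendsto_atTop (ProbabilityTheory.tendsto_cdf_atTop _) hc₁,
    bddBelow_setOf_le_of_tendsto_atBot (ProbabilityTheory.cdf _).mono
      (ProbabilityTheory.tendsto_cdf_atBot _) hc₀⟩

end Distribution

theorem stmt8_general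
    {Ω : Type*} [MeasurableSpace Ω] (P : Measure Ω) [IsProbabilityMeasure P]
    (ξ : Ω → ℝ) (ξn : ℕ → Ω → ℝ)
    (hξ : Measurable ξ)
    (δ : ℕ → ℝ)
    (hbd : ∀ n, ∀ ω, |ξn n ω - ξ ω| ≤ δ n)
    (α : ℝ) (hα : α ∈ Set.Ioo (0:ℝ) 1)
    (q : ℝ) (hq : q = sInf {t : ℝ | 1 - α ≤ (P {ω | ξ ω ≤ t}).toReal})
    (qn : ℕ → ℝ)
    (hqn : ∀ n, qn n = sInf {t : ℝ | 1 - α ≤ (P {ω | ξn n ω ≤ t}).toReal}) :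
    (fun n => qn n - q) =O[atTop] δ := by
  obtain ⟨hne, hbdd⟩ :=
    nonempty_and_bddBelow_setOf_le_measure_le P hξ (c := 1 - α) (by linarith [hα.2])
      (by linarith [hα.1])
  refine isBigO_of_le atTop fun n ↦ ?_
  have hquant : |qn n - q| ≤ δ n := by
    rw [hq, hqn n]
    exact abs_lowerQuantile_sub_le hne hbdd
      (toReal_measure_le_le_add P fun ω ↦ by linarith [(abs_le.1 (hbd n ω)).2])
      (toReal_measure_le_le_add P fun ω ↦ by linarith [(abs_le.1 (hbd n ω)).1])
  simpa only [Real.norm_eq_abs] using hquant.trans (le_abs_self _)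

/-- Quantile stability under uniform perturbation: if `‖ξ_n - ξ‖_∞ ≤ δ_n → 0`
and the CDF of `ξ` has a positive derivative at its `(1-α)`-quantile `q`, then
the `(1-α)`-quantiles `q_n` of `ξ_n` satisfy `|q_n - q| = O(δ_n)`. -/
theorem stmt8
    {Ω : Type*} [MeasurableSpace Ω] (P : Measure Ω) [IsProbabilityMeasure P]
    (ξ : Ω → ℝ) (ξn : ℕ → Ω → ℝ)
    (hξ : Measurable ξ) (hξn : ∀ n, Measurable (ξn n))
    (δ : ℕ → ℝ) (hδpos : ∀ n, 0 ≤ δ n) (hδ : Tendsto δ atTop (nhds 0))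
    (hbd : ∀ n, ∀ ω, |ξn n ω - ξ ω| ≤ δ n)
    (α : ℝ) (hα : α ∈ Set.Ioo (0:ℝ) 1)
    (q : ℝ) (hq : q = sInf {t : ℝ | 1 - α ≤ (P {ω | ξ ω ≤ t}).toReal})
    (qn : ℕ → ℝ)
    (hqn : ∀ n, qn n = sInf {t : ℝ | 1 - α ≤ (P {ω | ξn n ω ≤ t}).toReal})
    (d : ℝ) (hd : 0 < d)
    (hderiv : HasDerivAt (fun t => (P {ω | ξ ω ≤ t}).toReal) d q) :
    (fun n => qn n - q) =O[atTop] δ :=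
  stmt8_general P ξ ξn hξ δ hbd α hα q hq qn hqn
end

section
/- Let X ~ P, and let μ*, μ̂ : X → ℝ be measurable, q*, q̂ ∈ ℝ, α ∈ (0,1], and a > 0. Define h*(x) = (1/α)1{μ*(x) ≥ q*} and ĥ(x) = (1/α)1{μ̂(x) ≥ q̂}. Then α E|ĥ(X) - h*(X)| ≤ a E|μ̂(X) - μ*(X)| + a|q̂ - q*| + P(μ̂(X) - q̂ ∈ [-1/a, 0]) + P(μ*(X) - q* ∈ [-1/a, 0]). -/
/-!
The step `w ↦ 1{w ≥ 0}` is compared with its `a`-Lipschitz surrogate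
`1_a(w) = max 0 (min 1 (a w + 1))`, which agrees with it outside `[-1/a, 0]` and differs from it
by at most `1` inside. The triangle inequality through `1_a` bounds
`|1{v ≥ 0} - 1{w ≥ 0}|` by `a |v - w| + 1{v ∈ [-1/a, 0]} + 1{w ∈ [-1/a, 0]}`; apply this to
`v = μ̂ - q̂`, `w = μ* - q*` and integrate. The factor `α` cancels the `1/α` in `ĥ` and `h*`.
-/

open MeasureTheory Set

def surrogateStep (a w : ℝ) : ℝ := max 0 (min 1 (a * w + 1))

lemma abs_surrogateStep_sub_le {a : ℝ} (ha : 0 ≤ a) (v w : ℝ) :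
    |surrogateStep a v - surrogateStep a w| ≤ a * |v - w| := by
  have hclamp : ∀ x y : ℝ, |max 0 (min 1 x) - max 0 (min 1 y)| ≤ |x - y| := fun x y => by
    have h := (abs_max_sub_max_le_max 0 (min 1 x) 0 (min 1 y)).trans
      (max_le_max le_rfl (abs_min_sub_min_le_max 1 x 1 y))
    simpa only [sub_self, abs_zero, max_eq_right (abs_nonneg (x - y))] using h
  calc _ ≤ |(a * v + 1) - (a * w + 1)| := hclamp _ _
    _ = a * |v - w| := by rw [add_sub_add_right_eq_sub, ← mul_sub, abs_mul, abs_of_nonneg ha]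

lemma abs_step_sub_surrogateStep_le {a : ℝ} (ha : 0 < a) (w : ℝ) :
    |(if 0 ≤ w then (1 : ℝ) else 0) - surrogateStep a w| ≤ (Icc (-1 / a) 0).indicator 1 w := by
  unfold surrogateStep
  by_cases hw : w ∈ Icc (-1 / a) 0
  · rw [indicator_of_mem hw, Pi.one_apply]
    refine abs_sub_le_of_nonneg_of_le ?_ ?_ (le_max_left _ _) (max_le zero_le_one (min_le_left _ _))
      <;> split_ifs <;> norm_num
  rw [indicator_of_notMem hw]
  rcases not_and_or.mp hw with hlow | hpos
  · have hneg : a * w + 1 ≤ 0 := by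
      rw [not_le, lt_div_iff₀ ha] at hlow; linarith
    have hw0 : ¬ 0 ≤ w := fun hw0 => by nlinarith
    rw [if_neg hw0, max_eq_left (min_le_of_right_le hneg), sub_zero, abs_zero]
  · have hone : 1 ≤ a * w + 1 := by nlinarith [not_le.mp hpos]
    rw [if_pos (not_le.mp hpos).le, min_eq_left hone, max_eq_right zero_le_one, sub_self, abs_zero]

lemma abs_step_sub_step_le {a : ℝ} (ha : 0 < a) (v w : ℝ) :
    |(if 0 ≤ v then (1 : ℝ) else 0) - (if 0 ≤ w then 1 else 0)|
      ≤ a * |v - w| + (Icc (-1 / a) 0).indicator 1 v + (Icc (-1 / a) 0).indicator 1 w := by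
  have hv := abs_step_sub_surrogateStep_le ha v
  have hw := abs_step_sub_surrogateStep_le ha w
  have hvw := abs_surrogateStep_sub_le ha.le v w
  have htri₁ :=
    abs_sub_le (if 0 ≤ v then (1 : ℝ) else 0) (surrogateStep a v) (if 0 ≤ w then 1 else 0)
  have htri₂ := abs_sub_le (surrogateStep a v) (surrogateStep a w) (if 0 ≤ w then 1 else 0)
  rw [abs_sub_comm (surrogateStep a w)] at htri₂
  linarith

lemma integral_abs_step_sub_step_le {X : Type*} [MeasurableSpace X] {P : Measure X}
    [IsFiniteMeasure P] {f g : X → ℝ} (hf : Measurable f) (hg : Measurable g)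
    (hfg : Integrable (fun x => |f x - g x|) P) {a : ℝ} (ha : 0 < a) :
    ∫ x, |(if 0 ≤ f x then (1 : ℝ) else 0) - (if 0 ≤ g x then 1 else 0)| ∂P
      ≤ a * ∫ x, |f x - g x| ∂P + P.real {x | f x ∈ Icc (-1 / a) 0}
        + P.real {x | g x ∈ Icc (-1 / a) 0} := by
  set A := {x | f x ∈ Icc (-1 / a) 0}
  set B := {x | g x ∈ Icc (-1 / a) 0}
  have hA : MeasurableSet A := hf measurableSet_Icc
  have hB : MeasurableSet B := hg measurableSet_Icc
  have hA' : Integrable (A.indicator (1 : X → ℝ)) P := (integrable_const 1).indicator hA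
  have hB' : Integrable (B.indicator (1 : X → ℝ)) P := (integrable_const 1).indicator hB
  have hfgA : Integrable (fun x => a * |f x - g x| + A.indicator 1 x) P :=
    (hfg.const_mul a).add hA'
  calc _ ≤ ∫ x, (a * |f x - g x| + A.indicator 1 x + B.indicator 1 x) ∂P :=
        integral_mono_of_nonneg (ae_of_all _ fun _ => abs_nonneg _) (hfgA.add hB')
          (ae_of_all _ fun x => abs_step_sub_step_le ha (f x) (g x))
    _ = _ := by
        rw [integral_add hfgA hB', integral_add (hfg.const_mul a) hA',
          integral_const_mul, integral_indicator_one hA, integral_indicator_one hB]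

/-- Quantitative L¹ bound on the difference of threshold functions
`h*(x) = (1/α)1{μ*(x) ≥ q*}` and `ĥ(x) = (1/α)1{μ̂(x) ≥ q̂}`, via the
`a`-Lipschitz surrogate indicator. -/
theorem stmt11
    {X : Type*} [MeasurableSpace X] (P : Measure X) [IsProbabilityMeasure P]
    (μs μh : X → ℝ) (hμs : Measurable μs) (hμh : Measurable μh)
    (qs qh : ℝ) (α : ℝ) (hα : α ∈ Set.Ioc (0:ℝ) 1) (a : ℝ) (ha : 0 < a)
    (hint : Integrable (fun x => |μh x - μs x|) P) :
    α * ∫ x, |α⁻¹ * (if qh ≤ μh x then (1:ℝ) else 0)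
        - α⁻¹ * (if qs ≤ μs x then (1:ℝ) else 0)| ∂P
      ≤ a * ∫ x, |μh x - μs x| ∂P + a * |qh - qs|
        + (P {x | μh x - qh ∈ Set.Icc (-1 / a) 0}).toReal
        + (P {x | μs x - qs ∈ Set.Icc (-1 / a) 0}).toReal := by
  have hα0 : 0 < α := hα.1
  have hshift : ∀ x, |(μh x - qh) - (μs x - qs)| ≤ |μh x - μs x| + |qh - qs| := fun x => by
    rw [sub_sub_sub_comm]; exact abs_sub _ _
  have hshift_int : Integrable (fun x => |(μh x - qh) - (μs x - qs)|) P :=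
    (hint.add (integrable_const _)).mono' (by fun_prop)
      (ae_of_all _ fun x => by simpa only [Real.norm_eq_abs, abs_abs, Pi.add_apply] using hshift x)
  have hstep := integral_abs_step_sub_step_le (hμh.sub_const qh) (hμs.sub_const qs) hshift_int ha
  simp only [sub_nonneg] at hstep
  have hL1 : ∫ x, |(μh x - qh) - (μs x - qs)| ∂P ≤ ∫ x, |μh x - μs x| ∂P + |qh - qs| := by
    calc _ ≤ ∫ x, (|μh x - μs x| + |qh - qs|) ∂P :=
          integral_mono hshift_int (hint.add (integrable_const _)) hshift
      _ = _ := by rw [integral_add hint (integrable_const _), integral_const, probReal_univ, one_smul]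
  simp_rw [← mul_sub, abs_mul, abs_of_pos (inv_pos.mpr hα0)]
  rw [integral_const_mul, ← mul_assoc, mul_inv_cancel₀ hα0.ne', one_mul]
  simp only [← measureReal_def]
  linarith [mul_le_mul_of_nonneg_left hL1 ha.le]
end

section
/- Let T(Q) = inf_{η ∈ S} E_{Q}[f_η] where S ⊂ ℝ is compact, f_η is a family of functions with η ↦ E_Q[f_η] continuous on S for each Q, P_n → P in ℓ^∞(S) (as functionals η ↦ E[f_η]), and P has a unique minimizer η* in S. Suppose H_n → H uniformly on S with H continuous, r_n → ∞, and P_n + r_n^{-1}H_n remains in the admissible class. If additionally η ↦ P(η) is Lipschitz and every sequence of r_n^{-1}-approximate minimizers of P_n converges to η*, then r_n(T as applied: inf_{η∈S}(P_n + r_n^{-1}H_n)(η) - inf_{η∈S}P_n(η)) → H(η*). -/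
/-!
Let `e_i` minimize `P_i` on `S` and let `z_i` be an `r_i⁻²`-approximate minimizer of
`P_i + r_i⁻¹ H_i`. Comparing each infimum with the value at the other problem's (approximate)
minimizer gives
`H_i(z_i) - r_i⁻¹ ≤ r_i (inf_S (P_i + r_i⁻¹ H_i) - inf_S P_i) ≤ H_i(e_i)`.
Both `e_i` and `z_i` minimize `P_i` up to a slack `O(r_i⁻¹)`, so by uniform convergence
`P(e_i), P(z_i) → P(η*)`; on the compact `S` every cluster point of such a sequence is then a
minimizer of `P`, hence equals `η*`. Uniform convergence of `H_i` to the continuous `H` squeezes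
the middle term to `H(η*)`.
-/

open Filter Set Topology

section

variable {α : Type*} {S : Set α} {f h : α → ℝ} {r : ℝ}

theorem Set.Nonempty.exists_lt_sInf_image_add (hS : S.Nonempty) {ε : ℝ} (hε : 0 < ε) :
    ∃ x ∈ S, f x < sInf (f '' S) + ε := by
  obtain ⟨_, ⟨x, hx, rfl⟩, hlt⟩ := Real.lt_sInf_add_pos (hS.image f) hε
  exact ⟨x, hx, hlt⟩

theorem bddBelow_image_add_mul {c : ℝ} (hf : BddBelow (f '' S)) (hh : BddBelow (h '' S))
    (hc : 0 ≤ c) : BddBelow ((fun x => f x + c * h x) '' S) := by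
  obtain ⟨a, ha⟩ := hf
  obtain ⟨b, hb⟩ := hh
  refine ⟨a + c * b, forall_mem_image.2 fun x hx => ?_⟩
  have := mul_le_mul_of_nonneg_left (hb (mem_image_of_mem h hx)) hc
  linarith [ha (mem_image_of_mem f hx)]

theorem mul_sInf_image_add_inv_mul_sub_le {e : α} (hr : 0 < r) (he : e ∈ S)
    (hmin : IsMinOn f S e) (hbdd : BddBelow ((fun x => f x + r⁻¹ * h x) '' S)) :
    r * (sInf ((fun x => f x + r⁻¹ * h x) '' S) - sInf (f '' S)) ≤ h e := by
  have hinf : sInf (f '' S) = f e :=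
    IsLeast.csInf_eq ⟨mem_image_of_mem f he, forall_mem_image.2 fun x hx => hmin hx⟩
  have hle := csInf_le hbdd (mem_image_of_mem _ he)
  rw [hinf]
  calc r * (sInf ((fun x => f x + r⁻¹ * h x) '' S) - f e)
      ≤ r * (r⁻¹ * h e) := by gcongr; linarith
    _ = h e := by field_simp

theorem le_mul_sInf_image_add_inv_mul_sub {z : α} {δ : ℝ} (hr : 0 < r) (hz : z ∈ S)
    (hf : BddBelow (f '' S))
    (hzmin : f z + r⁻¹ * h z ≤ sInf ((fun x => f x + r⁻¹ * h x) '' S) + r⁻¹ * δ) :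
    h z - δ ≤ r * (sInf ((fun x => f x + r⁻¹ * h x) '' S) - sInf (f '' S)) := by
  have hle := csInf_le hf (mem_image_of_mem f hz)
  calc h z - δ = r * (r⁻¹ * h z - r⁻¹ * δ) := by field_simp
    _ ≤ r * (sInf ((fun x => f x + r⁻¹ * h x) '' S) - sInf (f '' S)) :=
      mul_le_mul_of_nonneg_left (by linarith) hr.le

theorem le_add_of_le_sInf_image_add_inv_mul {x₀ z : α} {δ M : ℝ} (hr : 0 < r) (hx₀ : x₀ ∈ S)
    (hz : z ∈ S) (hbdd : BddBelow ((fun x => f x + r⁻¹ * h x) '' S))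
    (hM : ∀ x ∈ S, ‖h x‖ ≤ M)
    (hzmin : f z + r⁻¹ * h z ≤ sInf ((fun x => f x + r⁻¹ * h x) '' S) + r⁻¹ * δ) :
    f z ≤ f x₀ + r⁻¹ * (2 * M + δ) := by
  have hle := csInf_le hbdd (mem_image_of_mem _ hx₀)
  have hhz := neg_le_of_abs_le (hM z hz)
  have hhx₀ := le_of_abs_le (hM x₀ hx₀)
  have : r⁻¹ * (h x₀ - h z) ≤ r⁻¹ * (2 * M) := by gcongr; linarith
  linarith

end

section

variable {X ι : Type*} {l : Filter ι}

theorem TendstoUniformlyOn.tendsto_sub_comp {E : Type*} [SeminormedAddCommGroup E]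
    {F : ι → X → E} {f : X → E} {S : Set X} (hF : TendstoUniformlyOn F f l S) {ξ : ι → X}
    (hξ : ∀ᶠ i in l, ξ i ∈ S) : Tendsto (fun i => F i (ξ i) - f (ξ i)) l (𝓝 0) := by
  refine Metric.tendsto_nhds.2 fun ε hε => ?_
  filter_upwards [Metric.tendstoUniformlyOn_iff.1 hF ε hε, hξ] with i hi hiS
  rw [dist_zero_right, ← dist_eq_norm, dist_comm]
  exact hi _ hiS

theorem TendstoUniformlyOn.eventually_norm_le {E : Type*} [SeminormedAddCommGroup E]
    {F : ι → X → E} {f : X → E} {S : Set X} (hF : TendstoUniformlyOn F f l S) {M : ℝ}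
    (hM : ∀ x ∈ S, ‖f x‖ ≤ M) : ∀ᶠ i in l, ∀ x ∈ S, ‖F i x‖ ≤ M + 1 := by
  filter_upwards [Metric.tendstoUniformlyOn_iff.1 hF 1 one_pos] with i hi x hx
  calc ‖F i x‖ ≤ ‖f x‖ + dist (f x) (F i x) := by
        rw [dist_comm, dist_eq_norm]; exact norm_le_insert' _ _
    _ ≤ M + 1 := add_le_add (hM x hx) (hi x hx).le

theorem IsCompact.tendsto_nhds_of_tendsto_comp [TopologicalSpace X] {Y : Type*}
    [TopologicalSpace Y] [T2Space Y]
    {S : Set X} (hS : IsCompact S) {f : X → Y} (hf : ContinuousOn f S) {x₀ : X}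
    (hfib : ∀ x ∈ S, f x = f x₀ → x = x₀) {ξ : ι → X} (hξ : ∀ᶠ i in l, ξ i ∈ S)
    (hlim : Tendsto (f ∘ ξ) l (𝓝 (f x₀))) : Tendsto ξ l (𝓝 x₀) := by
  refine hS.tendsto_nhds_of_unique_mapClusterPt hξ fun x hx hcl => hfib x hx ?_
  have hfx : Tendsto f (𝓝 x ⊓ map ξ l) (𝓝 (f x)) :=
    (hf x hx).mono_left (le_inf inf_le_left (inf_le_right.trans (le_principal_iff.2 hξ)))
  exact eq_of_nhds_neBot (ClusterPt.mono (hcl.tendsto_comp' hfx) hlim)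

theorem TendstoUniformlyOn.tendsto_nhds_of_approx_min [TopologicalSpace X] {F : ι → X → ℝ}
    {f : X → ℝ} {S : Set X} (hF : TendstoUniformlyOn F f l S) (hS : IsCompact S)
    (hf : ContinuousOn f S) {x₀ : X} (hx₀ : x₀ ∈ S) (hmin : IsMinOn f S x₀)
    (huniq : ∀ x ∈ S, f x ≤ f x₀ → x = x₀) {ξ : ι → X} (hξ : ∀ᶠ i in l, ξ i ∈ S)
    {δ : ι → ℝ} (hδ : Tendsto δ l (𝓝 0)) (happrox : ∀ᶠ i in l, F i (ξ i) ≤ F i x₀ + δ i) :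
    Tendsto ξ l (𝓝 x₀) := by
  refine hS.tendsto_nhds_of_tendsto_comp hf (fun x hx hfx => huniq x hx hfx.le) hξ ?_
  have hgap : Tendsto (fun i => f (ξ i) - F i (ξ i)) l (𝓝 0) := by
    simpa using (hF.tendsto_sub_comp hξ).neg
  have hupper := (hgap.add (hF.tendsto_at hx₀)).add hδ
  refine tendsto_of_tendsto_of_tendsto_of_le_of_le' tendsto_const_nhds (by simpa using hupper)
    (hξ.mono fun i hi => hmin hi) ?_
  filter_upwards [happrox] with i hi
  simp only [Function.comp_apply]
  linarith

end

theorem IsCompact.tendsto_mul_sInf_image_add_inv_mul_sub {X ι : Type*} [TopologicalSpace X]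
    {l : Filter ι} [l.NeBot] {S : Set X} (hS : IsCompact S) {P : ι → X → ℝ} {p : X → ℝ}
    {H : ι → X → ℝ} {h : X → ℝ} (hPcont : ∀ i, ContinuousOn (P i) S)
    (hP : TendstoUniformlyOn P p l S) (hH : TendstoUniformlyOn H h l S) (hh : ContinuousOn h S)
    {r : ι → ℝ} (hrpos : ∀ i, 0 < r i) (hr : Tendsto r l atTop) {x₀ : X} (hx₀ : x₀ ∈ S)
    (hmin : IsMinOn p S x₀) (huniq : ∀ x ∈ S, p x ≤ p x₀ → x = x₀) :
    Tendsto (fun i => r i * (sInf ((fun x => P i x + (r i)⁻¹ * H i x) '' S) - sInf (P i '' S)))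
      l (𝓝 (h x₀)) := by
  have hp : ContinuousOn p S := hP.continuousOn (Frequently.of_forall hPcont)
  obtain ⟨M, hM⟩ := hS.exists_bound_of_continuousOn hh
  have hHbdd := hH.eventually_norm_le hM
  have hGbdd : ∀ᶠ i in l, BddBelow ((fun x => P i x + (r i)⁻¹ * H i x) '' S) := by
    filter_upwards [hHbdd] with i hHi
    refine bddBelow_image_add_mul (hS.bddBelow_image (hPcont i)) ⟨-(M + 1), ?_⟩
      (inv_nonneg.2 (hrpos i).le)
    exact forall_mem_image.2 fun x hx => neg_le_of_abs_le (hHi x hx)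
  choose e he hemin using fun i => hS.exists_isMinOn ⟨x₀, hx₀⟩ (hPcont i)
  choose z hz hzmin using fun i => (nonempty_of_mem hx₀).exists_lt_sInf_image_add
    (f := fun x => P i x + (r i)⁻¹ * H i x) (mul_pos (inv_pos.2 (hrpos i)) (inv_pos.2 (hrpos i)))
  have hlimH {ξ : ι → X} (hξS : ∀ i, ξ i ∈ S) (hξ : Tendsto ξ l (𝓝 x₀)) :
      Tendsto (fun i => H i (ξ i)) l (𝓝 (h x₀)) :=
    hH.tendsto_comp (hh x₀ hx₀) (tendsto_nhdsWithin_iff.2 ⟨hξ, .of_forall hξS⟩)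
  have he_lim : Tendsto e l (𝓝 x₀) :=
    hP.tendsto_nhds_of_approx_min hS hp hx₀ hmin huniq (.of_forall he) tendsto_const_nhds
      (.of_forall fun i => by simpa using hemin i hx₀)
  have hz_lim : Tendsto z l (𝓝 x₀) := by
    refine hP.tendsto_nhds_of_approx_min hS hp hx₀ hmin huniq (.of_forall hz)
      (δ := fun i => (r i)⁻¹ * (2 * (M + 1) + (r i)⁻¹)) ?_ ?_
    · simpa using hr.inv_tendsto_atTop.mul (tendsto_const_nhds.add hr.inv_tendsto_atTop)
    · filter_upwards [hGbdd, hHbdd] with i hGi hHi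
      exact le_add_of_le_sInf_image_add_inv_mul (hrpos i) hx₀ (hz i) hGi hHi (hzmin i).le
  have hlower_lim : Tendsto (fun i => H i (z i) - (r i)⁻¹) l (𝓝 (h x₀)) := by
    simpa using (hlimH hz hz_lim).sub hr.inv_tendsto_atTop
  refine tendsto_of_tendsto_of_tendsto_of_le_of_le' hlower_lim (hlimH he he_lim) ?_ ?_
  · exact .of_forall fun i => le_mul_sInf_image_add_inv_mul_sub (hrpos i) (hz i)
      (hS.bddBelow_image (hPcont i)) (hzmin i).le
  · filter_upwards [hGbdd] with i hGi
    exact mul_sInf_image_add_inv_mul_sub_le (hrpos i) (he i) (hemin i) hGi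

theorem stmt18_general
    (S : Set ℝ) (hS : IsCompact S)
    (Pn : ℕ → ℝ → ℝ) (Pl : ℝ → ℝ) (Hn : ℕ → ℝ → ℝ) (H : ℝ → ℝ)
    (hPcont : ∀ n, ContinuousOn (Pn n) S)
    (hPn : TendstoUniformlyOn Pn Pl atTop S)
    (hHn : TendstoUniformlyOn Hn H atTop S)
    (hHcont : ContinuousOn H S)
    (r : ℕ → ℝ) (hrpos : ∀ n, 0 < r n) (hr : Tendsto r atTop atTop)
    (ηstar : ℝ) (hηS : ηstar ∈ S)
    (hmin : ∀ y ∈ S, Pl ηstar ≤ Pl y)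
    (huniq : ∀ η ∈ S, (∀ y ∈ S, Pl η ≤ Pl y) → η = ηstar) :
    Tendsto
      (fun n => r n *
        (sInf ((fun η => Pn n η + (r n)⁻¹ * Hn n η) '' S) - sInf (Pn n '' S)))
      atTop (nhds (H ηstar)) :=
  hS.tendsto_mul_sInf_image_add_inv_mul_sub hPcont hPn hHn hHcont hrpos hr hηS hmin
    fun η hη hle => huniq η hη fun y hy => hle.trans (hmin y hy)

/-- Uniform Hadamard differentiability of the infimum functional over a compact
set (abstract form of Lemma danskin): if `P_n → P` uniformly on `S`, `H_n → H`
uniformly on `S` with `H` continuous, `P` is Lipschitz on `S` with unique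
minimizer `η*` on `S`, and every sequence of `r_n⁻¹`-approximate minimizers of
`P_n` converges to `η*`, then
`r_n (inf_S (P_n + r_n⁻¹ H_n) - inf_S P_n) → H(η*)`. -/
theorem stmt18
    (S : Set ℝ) (hS : IsCompact S) (hSne : S.Nonempty)
    (Pn : ℕ → ℝ → ℝ) (Pl : ℝ → ℝ) (Hn : ℕ → ℝ → ℝ) (H : ℝ → ℝ)
    (hPcont : ∀ n, ContinuousOn (Pn n) S)
    (hPn : TendstoUniformlyOn Pn Pl atTop S)
    (hHn : TendstoUniformlyOn Hn H atTop S)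
    (hHcont : ContinuousOn H S)
    (r : ℕ → ℝ) (hrpos : ∀ n, 0 < r n) (hr : Tendsto r atTop atTop)
    (L : ℝ) (hLip : ∀ η ∈ S, ∀ η' ∈ S, |Pl η - Pl η'| ≤ L * |η - η'|)
    (ηstar : ℝ) (hηS : ηstar ∈ S)
    (hmin : ∀ y ∈ S, Pl ηstar ≤ Pl y)
    (huniq : ∀ η ∈ S, (∀ y ∈ S, Pl η ≤ Pl y) → η = ηstar)
    (happrox : ∀ η : ℕ → ℝ,
      (∀ n, η n ∈ S ∧ Pn n (η n) ≤ sInf (Pn n '' S) + (r n)⁻¹) →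
      Tendsto η atTop (nhds ηstar)) :
    Tendsto
      (fun n => r n *
        (sInf ((fun η => Pn n η + (r n)⁻¹ * Hn n η) '' S) - sInf (Pn n '' S)))
      atTop (nhds (H ηstar)) :=
  stmt18_general S hS Pn Pl Hn H hPcont hPn hHn hHcont r hrpos hr ηstar hηS hmin huniq
end
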